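/- arXiv:1610.09443 — 7 statements merged into one kernel-verified Lean document; each statement's English description precedes it below -/
import Mathlib

section
/- Let x_1, x_2, x_3, x_4 be elements of an associative algebra with x_i x_j = q^2 x_j x_i whenever i < j and both indices have the same parity, and x_i x_j = q^{-1} x_j x_i whenever i < j and the indices have different parity. Set A = x_1 + x_3 and B = x_2 + x_4. Then A^2 B - (q + q^{-1}) A B A + B A^2 = 0 and B^2 A - (q + q^{-1}) B A B + A B^2 = 0. -/
private lemma swap_aux {K : Type*} [Field K] {A : Type*} [Ring A] [Algebra K A]
    {x y : A} {c : K} (h : x * y = c • (y * x)) (z : A) :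
    x * (y * z) = c • (y * (x * z)) := by
  rw [← mul_assoc, h, smul_mul_assoc, mul_assoc]

/-- Quantum Serre relations for sl₃ on the two-point screening operators
`A = x₁ + x₃` and `B = x₂ + x₄`. -/
theorem quantum_serre_two_point {K : Type*} [Field K] {A : Type*} [Ring A] [Algebra K A]
    (q : Kˣ) (x₁ x₂ x₃ x₄ : A)
    (h13 : x₁ * x₃ = ((q : K) ^ 2) • (x₃ * x₁))
    (h24 : x₂ * x₄ = ((q : K) ^ 2) • (x₄ * x₂))
    (h12 : x₁ * x₂ = ((q : K)⁻¹) • (x₂ * x₁))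
    (h14 : x₁ * x₄ = ((q : K)⁻¹) • (x₄ * x₁))
    (h23 : x₂ * x₃ = ((q : K)⁻¹) • (x₃ * x₂))
    (h34 : x₃ * x₄ = ((q : K)⁻¹) • (x₄ * x₃)) :
    ((x₁ + x₃) ^ 2 * (x₂ + x₄) - ((q : K) + (q : K)⁻¹) • ((x₁ + x₃) * (x₂ + x₄) * (x₁ + x₃))
        + (x₂ + x₄) * (x₁ + x₃) ^ 2 = 0) ∧
      ((x₂ + x₄) ^ 2 * (x₁ + x₃) - ((q : K) + (q : K)⁻¹) • ((x₂ + x₄) * (x₁ + x₃) * (x₂ + x₄))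
        + (x₁ + x₃) * (x₂ + x₄) ^ 2 = 0) := by
  have hq : (q : K) ≠ 0 := q.ne_zero
  constructor <;>
  · simp only [sq, mul_add, add_mul, smul_add, mul_assoc]
    simp only [h13, h24, h12, h14, h23, h34, swap_aux h13, swap_aux h24, swap_aux h12,
      swap_aux h14, swap_aux h23, swap_aux h34, smul_mul_assoc, mul_smul_comm, smul_smul,
      smul_add, add_smul]
    match_scalars <;> field_simp <;> ring
end

section
/- Let A be an associative algebra containing elements S, T satisfying the quantum Serre relation S^2 T - (q+q^{-1}) S T S + T S^2 = 0, and let X be a new variable with relations S X = q^2 X S and T X = q^{-1} X T. Then S' = S + X and T satisfy the same quantum Serre relation: (S')^2 T - (q+q^{-1}) S' T S' + T (S')^2 = 0. -/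
/-- Adjoining a q-commuting variable `X` to the first screening operator preserves
the quantum Serre relation. -/
theorem quantum_serre_extend_S {K : Type*} [Field K] {A : Type*} [Ring A] [Algebra K A]
    (q : Kˣ) (S T X : A)
    (hserre : S ^ 2 * T - ((q : K) + (q : K)⁻¹) • (S * T * S) + T * S ^ 2 = 0)
    (hSX : S * X = ((q : K) ^ 2) • (X * S))
    (hTX : T * X = ((q : K)⁻¹) • (X * T)) :
    (S + X) ^ 2 * T - ((q : K) + (q : K)⁻¹) • ((S + X) * T * (S + X)) + T * (S + X) ^ 2 = 0 := by
  have hq0 : (q : K) ≠ 0 := q.ne_zero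
  have hqq : (q : K) * (q : K)⁻¹ = 1 := mul_inv_cancel₀ hq0
  have hqq' : (q : K)⁻¹ * (q : K) = 1 := inv_mul_cancel₀ hq0
  have h1 : S * X * T = ((q : K) ^ 2) • (X * S * T) := by
    rw [hSX, smul_mul_assoc]
  have h2 : S * T * X = (q : K) • (X * S * T) := by
    rw [mul_assoc, hTX, mul_smul_comm, ← mul_assoc, h1, smul_smul]
    congr 1
    field_simp
  have h3 : X * X * T = (q : K) • (X * T * X) := by
    have hXT : X * T = (q : K) • (T * X) := by
      rw [hTX, smul_smul, hqq, one_smul]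
    conv_lhs => rw [mul_assoc, hXT]
    rw [mul_smul_comm, ← mul_assoc]
  have h4 : T * S * X = (q : K) • (X * T * S) := by
    rw [mul_assoc, hSX, mul_smul_comm, ← mul_assoc, hTX, smul_mul_assoc, smul_smul]
    congr 1
    field_simp
  have h5 : T * X * X = ((q : K)⁻¹) • (X * T * X) := by
    rw [hTX, smul_mul_assoc]
  have h6 : T * X * S = ((q : K)⁻¹) • (X * T * S) := by
    rw [hTX, smul_mul_assoc]
  have expand : (S + X) ^ 2 * T - ((q : K) + (q : K)⁻¹) • ((S + X) * T * (S + X))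
      + T * (S + X) ^ 2
      = (S ^ 2 * T - ((q : K) + (q : K)⁻¹) • (S * T * S) + T * S ^ 2)
        + ((q : K) ^ 2 • (X * S * T) + X * S * T
            - ((q : K) + (q : K)⁻¹) • ((q : K) • (X * S * T)))
        + ((q : K) • (X * T * S) + (q : K)⁻¹ • (X * T * S)
            - ((q : K) + (q : K)⁻¹) • (X * T * S))
        + ((q : K) • (X * T * X) + (q : K)⁻¹ • (X * T * X)
            - ((q : K) + (q : K)⁻¹) • (X * T * X)) := by
    simp only [pow_two, add_mul, mul_add, ← mul_assoc, h1, h2, h3, h4, h5, h6]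
    module
  rw [expand, hserre]
  have e1 : (q : K) ^ 2 • (X * S * T) + X * S * T
      - ((q : K) + (q : K)⁻¹) • ((q : K) • (X * S * T)) = 0 := by
    rw [smul_smul]
    have : ((q : K) + (q : K)⁻¹) * (q : K) = (q : K) ^ 2 + 1 := by
      rw [add_mul, hqq']; ring
    rw [this, add_smul, one_smul]
    abel
  have e2 : ∀ Y : A, (q : K) • Y + (q : K)⁻¹ • Y - ((q : K) + (q : K)⁻¹) • Y = 0 := by
    intro Y; rw [add_smul]; abel
  rw [e1, e2, e2]
  abel
end

section
/- Let A be an associative algebra containing elements S, T satisfying the quantum Serre relation S^2 T - (q+q^{-1}) S T S + T S^2 = 0, and let Y be a new variable with relations S Y = q^{-1} Y S and T Y = q^2 Y T. Then S and T' = T + Y satisfy S^2 T' - (q+q^{-1}) S T' S + T' S^2 = 0. -/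
/-- Adjoining a q-commuting variable `Y` to the second screening operator preserves
the quantum Serre relation. -/
theorem quantum_serre_extend_T {K : Type*} [Field K] {A : Type*} [Ring A] [Algebra K A]
    (q : Kˣ) (S T Y : A)
    (hserre : S ^ 2 * T - ((q : K) + (q : K)⁻¹) • (S * T * S) + T * S ^ 2 = 0)
    (hSY : S * Y = ((q : K)⁻¹) • (Y * S))
    (hTY : T * Y = ((q : K) ^ 2) • (Y * T)) :
    S ^ 2 * (T + Y) - ((q : K) + (q : K)⁻¹) • (S * (T + Y) * S) + (T + Y) * S ^ 2 = 0 := by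
  have hq : (q : K) ≠ 0 := q.ne_zero
  have h1 : S ^ 2 * Y = ((q : K)⁻¹ * (q : K)⁻¹) • (Y * S ^ 2) := by
    have : S ^ 2 * Y = S * (S * Y) := by noncomm_ring
    rw [this, hSY, mul_smul_comm, ← mul_assoc, hSY, smul_mul_assoc, smul_smul]
    simp [sq, mul_assoc]
  have h2 : S * Y * S = ((q : K)⁻¹) • (Y * S ^ 2) := by
    rw [hSY, smul_mul_assoc, mul_assoc, ← pow_two]
  have key : S ^ 2 * Y - ((q : K) + (q : K)⁻¹) • (S * Y * S) + Y * S ^ 2 = 0 := by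
    rw [h1, h2, smul_smul]
    match_scalars
    field_simp
    ring
  calc S ^ 2 * (T + Y) - ((q : K) + (q : K)⁻¹) • (S * (T + Y) * S) + (T + Y) * S ^ 2
      = (S ^ 2 * T - ((q : K) + (q : K)⁻¹) • (S * T * S) + T * S ^ 2)
        + (S ^ 2 * Y - ((q : K) + (q : K)⁻¹) • (S * Y * S) + Y * S ^ 2) := by
        simp only [mul_add, add_mul, smul_add]; noncomm_ring
    _ = 0 := by rw [hserre, key, add_zero]
end

section
/- Let x_1, x_2, x_1^{-1}, x_2^{-1} be invertible elements of an associative algebra with x_1 x_2 = q^2 x_2 x_1 (hence x_1 x_2^{-1} = q^{-2} x_2^{-1} x_1 and x_1^{-1} x_2^{-1} = q^2 x_2^{-1} x_1^{-1}). Set E = x_1 + x_2 and F = x_1^{-1} + x_2^{-1}. Then E^3 F - (q^2 + 1 + q^{-2}) E^2 F E + (q^2 + 1 + q^{-2}) E F E^2 - F E^3 = 0. -/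
set_option maxHeartbeats 1600000 in
/-- Affine sl₂-hat quantum Serre relation (Cartan entry -2) for the two-point screening
operators `E = x₁ + x₂`, `F = x₁⁻¹ + x₂⁻¹` built from Laurent variables. -/
theorem affine_quantum_serre_two_point {K : Type*} [Field K] {A : Type*} [Ring A] [Algebra K A]
    (q : Kˣ) (x₁ x₂ : Aˣ)
    (h : (x₁ : A) * x₂ = ((q : K) ^ 2) • ((x₂ : A) * x₁))
    (h' : (x₁ : A) * ((x₂⁻¹ : Aˣ) : A) = (((q : K)⁻¹) ^ 2) • (((x₂⁻¹ : Aˣ) : A) * x₁))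
    (h'' : ((x₁⁻¹ : Aˣ) : A) * ((x₂⁻¹ : Aˣ) : A)
        = ((q : K) ^ 2) • (((x₂⁻¹ : Aˣ) : A) * ((x₁⁻¹ : Aˣ) : A))) :
    ((x₁ : A) + x₂) ^ 3 * (((x₁⁻¹ : Aˣ) : A) + ((x₂⁻¹ : Aˣ) : A))
      - ((q : K) ^ 2 + 1 + ((q : K)⁻¹) ^ 2) •
          (((x₁ : A) + x₂) ^ 2 * (((x₁⁻¹ : Aˣ) : A) + ((x₂⁻¹ : Aˣ) : A)) * ((x₁ : A) + x₂))
      + ((q : K) ^ 2 + 1 + ((q : K)⁻¹) ^ 2) •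
          (((x₁ : A) + x₂) * (((x₁⁻¹ : Aˣ) : A) + ((x₂⁻¹ : Aˣ) : A)) * ((x₁ : A) + x₂) ^ 2)
      - (((x₁⁻¹ : Aˣ) : A) + ((x₂⁻¹ : Aˣ) : A)) * ((x₁ : A) + x₂) ^ 3 = 0 := by
  have hq : (q : K) ≠ 0 := q.ne_zero
  set a : A := (x₁ : A) with ha_def
  set b : A := (x₂ : A) with hb_def
  set a' : A := ((x₁⁻¹ : Aˣ) : A) with ha'_def
  set b' : A := ((x₂⁻¹ : Aˣ) : A) with hb'_def
  set s : K := (q : K) ^ 2 with hs_def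
  set t : K := ((q : K)⁻¹) ^ 2 with ht_def
  have hts : t * s = 1 := by rw [hs_def, ht_def]; field_simp
  have hst : s * t = 1 := by rw [hs_def, ht_def]; field_simp
  have haa' : a * a' = 1 := x₁.mul_inv
  have ha'a : a' * a = 1 := x₁.inv_mul
  have hbb' : b * b' = 1 := x₂.mul_inv
  have hb'b : b' * b = 1 := x₂.inv_mul
  have e2 : a * (b * a') = s • b := by
    rw [← mul_assoc, h, smul_mul_assoc, mul_assoc, haa', mul_one]
  have hba' : b * a' = s • (a' * b) := by
    calc b * a' = a' * (a * (b * a')) := by rw [← mul_assoc, ha'a, one_mul]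
    _ = a' * (s • b) := by rw [e2]
    _ = s • (a' * b) := mul_smul_comm s a' b
  have h3 : a' * b = t • (b * a') := by
    rw [hba', smul_smul, hts, one_smul]
  -- trailing versions
  have H1 : ∀ y : A, a * (b * y) = s • (b * (a * y)) := fun y => by
    rw [← mul_assoc, h, smul_mul_assoc, mul_assoc]
  have H2 : ∀ y : A, a * (b' * y) = t • (b' * (a * y)) := fun y => by
    rw [← mul_assoc, h', smul_mul_assoc, mul_assoc]
  have H3 : ∀ y : A, a' * (b * y) = t • (b * (a' * y)) := fun y => by
    rw [← mul_assoc, h3, smul_mul_assoc, mul_assoc]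
  have H4 : ∀ y : A, a' * (b' * y) = s • (b' * (a' * y)) := fun y => by
    rw [← mul_assoc, h'', smul_mul_assoc, mul_assoc]
  have C1 : ∀ y : A, a * (a' * y) = y := fun y => by rw [← mul_assoc, haa', one_mul]
  have C2 : ∀ y : A, a' * (a * y) = y := fun y => by rw [← mul_assoc, ha'a, one_mul]
  have C3 : ∀ y : A, b * (b' * y) = y := fun y => by rw [← mul_assoc, hbb', one_mul]
  have C4 : ∀ y : A, b' * (b * y) = y := fun y => by rw [← mul_assoc, hb'b, one_mul]
  simp only [pow_succ, pow_zero, one_mul]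
  simp only [mul_add, add_mul, mul_assoc]
  simp only [H1, H2, H3, H4, C1, C2, C3, C4, h, h', h'', h3, haa', ha'a, hbb', hb'b,
    mul_smul_comm, smul_mul_assoc, smul_smul, mul_one, smul_add, smul_sub]
  match_scalars
  all_goals simp only [hs_def, ht_def]
  all_goals clear_value a b a' b' s t
  all_goals clear hts hst h h' h'' h3 hba' e2 H1 H2 H3 H4 C1 C2 C3 C4 haa' ha'a hbb' hb'b ht_def hs_def ha_def hb_def ha'_def hb'_def a b a' b' s t
  all_goals field_simp
  all_goals try ring
  all_goals have h10 : ((q:K))^10 * ((q:K))⁻¹^10 = 1 := by rw [← mul_pow, mul_inv_cancel₀ hq, one_pow]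
  all_goals have h16 : ((q:K))^16 * ((q:K))⁻¹^16 = 1 := by rw [← mul_pow, mul_inv_cancel₀ hq, one_pow]
  all_goals first
    | linear_combination h16
    | linear_combination (-((q:K))^2 - 4*((q:K))^4 - 4*((q:K))^6 - 3*((q:K))^8) * h10
end

section
/- Let x_1, x_2, x_3 be elements of an associative algebra with x_i x_j = q x_j x_i for i < j, and let S = x_1 + x_2 + x_3. Then the element P = x_1 x_2^{-1} x_3 commutes with S: S P = P S (assuming x_2 is invertible). -/
/-- The degree-one invariant `P = x₁ x₂⁻¹ x₃` commutes with `S = x₁ + x₂ + x₃` when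
`xᵢ xⱼ = q xⱼ xᵢ` for `i < j`. -/
theorem three_point_invariant_commutes {K : Type*} [Field K] {A : Type*} [Ring A] [Algebra K A]
    (q : Kˣ) (x₁ x₃ : A) (x₂ : Aˣ)
    (h12 : x₁ * x₂ = (q : K) • ((x₂ : A) * x₁))
    (h13 : x₁ * x₃ = (q : K) • (x₃ * x₁))
    (h23 : (x₂ : A) * x₃ = (q : K) • (x₃ * x₂)) :
    (x₁ + (x₂ : A) + x₃) * (x₁ * ((x₂⁻¹ : Aˣ) : A) * x₃)
      = (x₁ * ((x₂⁻¹ : Aˣ) : A) * x₃) * (x₁ + (x₂ : A) + x₃) := by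
  set y : A := ((x₂⁻¹ : Aˣ) : A) with hy
  have hqq : ((q⁻¹ : Kˣ) : K) * (q : K) = 1 := Units.inv_mul q
  have hy1 : y * x₁ = (q : K) • (x₁ * y) := by
    have := congrArg (fun a => y * a * y) h12
    simpa [hy, mul_assoc, mul_smul_comm, smul_mul_assoc,
      Units.mul_inv_cancel_left, Units.inv_mul_cancel_left] using this
  have hy3 : x₃ * y = (q : K) • (y * x₃) := by
    have := congrArg (fun a => y * a * y) h23
    simpa [hy, mul_assoc, mul_smul_comm, smul_mul_assoc,
      Units.mul_inv_cancel_left, Units.inv_mul_cancel_left] using this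
  have h31 : x₃ * x₁ = ((q⁻¹ : Kˣ) : K) • (x₁ * x₃) := by
    rw [h13, smul_smul, hqq, one_smul]
  have h32 : x₃ * (x₂ : A) = ((q⁻¹ : Kˣ) : K) • ((x₂ : A) * x₃) := by
    rw [h23, smul_smul, hqq, one_smul]
  have h21 : (x₂ : A) * x₁ = ((q⁻¹ : Kˣ) : K) • (x₁ * (x₂ : A)) := by
    rw [h12, smul_smul, hqq, one_smul]
  have t1 : x₁ * (x₁ * y * x₃) = (x₁ * y * x₃) * x₁ := by
    calc x₁ * (x₁ * y * x₃) = x₁ * (x₁ * (y * x₃)) := by rw [mul_assoc]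
      _ = (((q⁻¹ : Kˣ) : K) * (q : K)) • (x₁ * (x₁ * (y * x₃))) := by rw [hqq, one_smul]
      _ = ((q⁻¹ : Kˣ) : K) • (x₁ * ((q : K) • (x₁ * y) * x₃)) := by
          rw [mul_smul]; simp only [smul_mul_assoc, mul_smul_comm, mul_assoc]
      _ = ((q⁻¹ : Kˣ) : K) • (x₁ * (y * (x₁ * x₃))) := by
          rw [← hy1]; simp only [mul_assoc]
      _ = x₁ * (y * (x₃ * x₁)) := by
          rw [h31]; simp only [mul_smul_comm]
      _ = (x₁ * y * x₃) * x₁ := by simp only [mul_assoc]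
  have t2 : (x₂ : A) * (x₁ * y * x₃) = (x₁ * y * x₃) * x₂ := by
    have l : (x₂ : A) * (x₁ * y * x₃) = ((q⁻¹ : Kˣ) : K) • (x₁ * x₃) := by
      rw [← mul_assoc, ← mul_assoc, h21, smul_mul_assoc, smul_mul_assoc,
        mul_assoc x₁ (x₂ : A) y, hy]
      simp [mul_assoc]
    have r : (x₁ * y * x₃) * x₂ = ((q⁻¹ : Kˣ) : K) • (x₁ * x₃) := by
      rw [mul_assoc, h32, mul_smul_comm, ← mul_assoc, mul_assoc x₁ y (x₂ : A), hy]
      simp [mul_assoc]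
    rw [l, r]
  have t3 : x₃ * (x₁ * y * x₃) = (x₁ * y * x₃) * x₃ := by
    calc x₃ * (x₁ * y * x₃) = (x₃ * x₁) * (y * x₃) := by
          rw [mul_assoc, ← mul_assoc, ← mul_assoc]
      _ = ((q⁻¹ : Kˣ) : K) • (x₁ * (x₃ * y) * x₃) := by
          rw [h31, smul_mul_assoc, mul_assoc, ← mul_assoc x₃ y x₃, ← mul_assoc]
      _ = (((q⁻¹ : Kˣ) : K) * (q : K)) • (x₁ * (y * x₃) * x₃) := by
          rw [hy3, mul_smul_comm, smul_mul_assoc, smul_smul]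
      _ = (x₁ * y * x₃) * x₃ := by rw [hqq, one_smul, mul_assoc x₁ y x₃]
  rw [add_mul, add_mul, mul_add, mul_add, t1, t2, t3]
end

section
/- Let x_1, x_2, x_3 be invertible elements of an associative algebra with x_i x_j = q x_j x_i for i < j, such that x_1 + x_2 + x_3 is invertible. Then \Sigma := x_1 x_2^{-1} x_3 (x_1 + x_2 + x_3)^{-1} commutes with x_1 + x_2 + x_3, and \Sigma has degree zero with respect to the grading deg(x_i) = 1. -/
private lemma aut_inv {K : Type*} [Field K] {A : Type*} [Ring A] [Algebra K A]
    (φ : A ≃ₐ[K] A) (u : Aˣ) (t : Kˣ) (h : φ (u : A) = (t : K) • (u : A)) :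
    φ ((u⁻¹ : Aˣ) : A) = ((t⁻¹ : Kˣ) : K) • ((u⁻¹ : Aˣ) : A) := by
  have h1 : φ (u : A) * (((t⁻¹ : Kˣ) : K) • ((u⁻¹ : Aˣ) : A)) = 1 := by
    rw [h, smul_mul_assoc, mul_smul_comm, smul_smul]
    simp
  calc φ ((u⁻¹ : Aˣ) : A)
      = φ ((u⁻¹ : Aˣ) : A) * (φ (u : A) * (((t⁻¹ : Kˣ) : K) • ((u⁻¹ : Aˣ) : A))) := by
        rw [h1, mul_one]
    _ = (φ ((u⁻¹ : Aˣ) : A) * φ (u : A)) * (((t⁻¹ : Kˣ) : K) • ((u⁻¹ : Aˣ) : A)) := by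
        rw [mul_assoc]
    _ = ((t⁻¹ : Kˣ) : K) • ((u⁻¹ : Aˣ) : A) := by
        rw [← map_mul]; simp

/-- The element `Σ = x₁ x₂⁻¹ x₃ (x₁+x₂+x₃)⁻¹` commutes with `x₁+x₂+x₃` and has degree
zero: it is fixed by every algebra automorphism rescaling each `xᵢ` by a scalar `t`. -/
theorem lattice_virasoro_generator_sl2 {K : Type*} [Field K] {A : Type*} [Ring A] [Algebra K A]
    (q : Kˣ) (x₁ x₂ x₃ s : Aˣ)
    (h12 : (x₁ : A) * x₂ = (q : K) • ((x₂ : A) * x₁))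
    (h13 : (x₁ : A) * x₃ = (q : K) • ((x₃ : A) * x₁))
    (h23 : (x₂ : A) * x₃ = (q : K) • ((x₃ : A) * x₂))
    (hs : (s : A) = (x₁ : A) + x₂ + x₃) :
    ((x₁ : A) * ((x₂⁻¹ : Aˣ) : A) * x₃ * ((s⁻¹ : Aˣ) : A)) * ((x₁ : A) + x₂ + x₃)
        = ((x₁ : A) + x₂ + x₃) * ((x₁ : A) * ((x₂⁻¹ : Aˣ) : A) * x₃ * ((s⁻¹ : Aˣ) : A)) ∧
      ∀ (t : Kˣ) (φ : A ≃ₐ[K] A),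
        φ (x₁ : A) = (t : K) • (x₁ : A) → φ (x₂ : A) = (t : K) • (x₂ : A) →
        φ (x₃ : A) = (t : K) • (x₃ : A) →
        φ ((x₁ : A) * ((x₂⁻¹ : Aˣ) : A) * x₃ * ((s⁻¹ : Aˣ) : A))
          = (x₁ : A) * ((x₂⁻¹ : Aˣ) : A) * x₃ * ((s⁻¹ : Aˣ) : A) := by
  set y : A := (x₁ : A) * ((x₂⁻¹ : Aˣ) : A) * x₃ with hy
  -- derived commutation relations
  have h2inv1 : ((x₂⁻¹ : Aˣ) : A) * x₁ = (q : K) • ((x₁ : A) * ((x₂⁻¹ : Aˣ) : A)) := by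
    have e : ((x₂⁻¹ : Aˣ) : A) * ((x₁ : A) * x₂) * ((x₂⁻¹ : Aˣ) : A)
        = ((x₂⁻¹ : Aˣ) : A) * x₁ := by
      rw [← mul_assoc, mul_assoc _ (x₂ : A) _]
      simp
    rw [← e, h12, mul_smul_comm, smul_mul_assoc]
    simp [mul_assoc]
  have h32inv : (x₃ : A) * ((x₂⁻¹ : Aˣ) : A) = (q : K) • (((x₂⁻¹ : Aˣ) : A) * x₃) := by
    have e : ((x₂⁻¹ : Aˣ) : A) * ((x₂ : A) * x₃) * ((x₂⁻¹ : Aˣ) : A)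
        = (x₃ : A) * ((x₂⁻¹ : Aˣ) : A) := by
      rw [← mul_assoc]
      simp
    rw [← e, h23, mul_smul_comm, smul_mul_assoc]
    simp [mul_assoc]
  have h31 : (x₃ : A) * x₁ = ((q⁻¹ : Kˣ) : K) • ((x₁ : A) * x₃) := by
    rw [h13, smul_smul]; simp
  have h32 : (x₃ : A) * x₂ = ((q⁻¹ : Kˣ) : K) • ((x₂ : A) * x₃) := by
    rw [h23, smul_smul]; simp
  have h21 : (x₂ : A) * x₁ = ((q⁻¹ : Kˣ) : K) • ((x₁ : A) * x₂) := by
    rw [h12, smul_smul]; simp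
  -- y commutes with each xᵢ
  have hc1 : y * x₁ = (x₁ : A) * y := by
    have e : ((x₂⁻¹ : Aˣ) : A) * ((x₁ : A) * x₃)
        = (q : K) • ((x₁ : A) * (((x₂⁻¹ : Aˣ) : A) * x₃)) := by
      rw [← mul_assoc, h2inv1, smul_mul_assoc, mul_assoc]
    rw [hy, mul_assoc _ (x₃ : A) (x₁ : A), h31, mul_smul_comm,
      mul_assoc (x₁ : A) _ _, e]
    simp [smul_smul, smul_mul_assoc, mul_smul_comm, mul_assoc]
  have hc2 : y * x₂ = (x₂ : A) * y := by
    rw [hy, mul_assoc _ (x₃ : A) (x₂ : A), h32, ← mul_assoc (x₂ : A) _ _,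
      ← mul_assoc (x₂ : A) _ _, h21]
    simp [smul_mul_assoc, mul_smul_comm, mul_assoc]
  have hc3 : y * x₃ = (x₃ : A) * y := by
    rw [hy, ← mul_assoc (x₃ : A) _ _, ← mul_assoc (x₃ : A) _ _, h31,
      smul_mul_assoc, smul_mul_assoc, mul_assoc (x₁ : A) (x₃ : A) _, h32inv]
    simp [smul_smul, smul_mul_assoc, mul_smul_comm, mul_assoc]
  have hcs : y * (s : A) = (s : A) * y := by
    rw [hs, mul_add, mul_add, add_mul, add_mul, hc1, hc2, hc3]
  have hcsi : y * ((s⁻¹ : Aˣ) : A) = ((s⁻¹ : Aˣ) : A) * y := by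
    calc y * ((s⁻¹ : Aˣ) : A)
        = ((s⁻¹ : Aˣ) : A) * ((s : A) * (y * ((s⁻¹ : Aˣ) : A))) :=
          (Units.inv_mul_cancel_left s _).symm
      _ = ((s⁻¹ : Aˣ) : A) * (((s : A) * y) * ((s⁻¹ : Aˣ) : A)) := by rw [mul_assoc (s : A) y]
      _ = ((s⁻¹ : Aˣ) : A) * ((y * (s : A)) * ((s⁻¹ : Aˣ) : A)) := by rw [hcs]
      _ = ((s⁻¹ : Aˣ) : A) * y := by rw [Units.mul_inv_cancel_right]
  constructor
  · rw [← hs, Units.inv_mul_cancel_right, hcsi, Units.mul_inv_cancel_left]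
  · intro t φ h1 h2 h3
    have hφs : φ (s : A) = (t : K) • (s : A) := by
      rw [hs, map_add, map_add, h1, h2, h3, smul_add, smul_add]
    have e2 := aut_inv φ x₂ t h2
    have es := aut_inv φ s t hφs
    rw [map_mul, map_mul, map_mul, h1, e2, h3, es]
    simp [hy, smul_smul, smul_mul_assoc, mul_smul_comm, mul_assoc]
end

section
/- Let x_2, x_3, x_4, x_5 be invertible elements with x_i x_j = q x_j x_i for i < j and x_3, x_4 + x_5, x_3 + x_4 invertible. Set \Sigma = (x_4 + x_5)^{-1} x_4 x_2 (x_3 + x_4)^{-1} and T = x_2 + x_3 + x_4 + x_5. Then \Sigma^2 T - (q + q^{-1}) \Sigma T \Sigma + T \Sigma^2 = 0. -/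
private lemma conj_aux {K : Type*} [Field K] {A : Type*} [Ring A] [Algebra K A]
    (s : K) (w : Aˣ) (y : A) (h : y * (w : A) = s • ((w : A) * y)) :
    ((w⁻¹ : Aˣ) : A) * y = s • (y * ((w⁻¹ : Aˣ) : A)) := by
  calc ((w⁻¹ : Aˣ) : A) * y = ((w⁻¹ : Aˣ) : A) * (y * (w : A)) * ((w⁻¹ : Aˣ) : A) := by
        rw [mul_assoc ((w⁻¹ : Aˣ) : A), Units.mul_inv_cancel_right]
    _ = ((w⁻¹ : Aˣ) : A) * (s • ((w : A) * y)) * ((w⁻¹ : Aˣ) : A) := by rw [h]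
    _ = s • (y * ((w⁻¹ : Aˣ) : A)) := by
        rw [mul_smul_comm, smul_mul_assoc, Units.inv_mul_cancel_left]

private lemma conj_aux' {K : Type*} [Field K] {A : Type*} [Ring A] [Algebra K A]
    (s : K) (w : Aˣ) (y : A) (h : (w : A) * y = s • (y * (w : A))) :
    y * ((w⁻¹ : Aˣ) : A) = s • (((w⁻¹ : Aˣ) : A) * y) := by
  calc y * ((w⁻¹ : Aˣ) : A) = ((w⁻¹ : Aˣ) : A) * ((w : A) * y) * ((w⁻¹ : Aˣ) : A) := by
        rw [Units.inv_mul_cancel_left]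
    _ = ((w⁻¹ : Aˣ) : A) * (s • (y * (w : A))) * ((w⁻¹ : Aˣ) : A) := by rw [h]
    _ = s • (((w⁻¹ : Aˣ) : A) * y) := by
        rw [mul_smul_comm, smul_mul_assoc, mul_assoc, mul_assoc, Units.mul_inv, mul_one]

/-- The quantum Serre relation for the pair `(Σ, T)` where
`Σ = (x₄+x₅)⁻¹ x₄ x₂ (x₃+x₄)⁻¹` and `T = x₂+x₃+x₄+x₅`. -/
theorem abcd_generator_serre {K : Type*} [Field K] {A : Type*} [Ring A] [Algebra K A]
    (q : Kˣ) (x : ℕ → Aˣ)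
    (hcomm : ∀ i j, 2 ≤ i → i < j → j ≤ 5 → (x i : A) * x j = (q : K) • ((x j : A) * x i))
    (u v : Aˣ) (hu : (u : A) = (x 4 : A) + x 5) (hv : (v : A) = (x 3 : A) + x 4) :
    (((u⁻¹ : Aˣ) : A) * x 4 * x 2 * ((v⁻¹ : Aˣ) : A)) ^ 2 * ((x 2 : A) + x 3 + x 4 + x 5)
        - ((q : K) + (q : K)⁻¹) •
          ((((u⁻¹ : Aˣ) : A) * x 4 * x 2 * ((v⁻¹ : Aˣ) : A)) * ((x 2 : A) + x 3 + x 4 + x 5)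
            * (((u⁻¹ : Aˣ) : A) * x 4 * x 2 * ((v⁻¹ : Aˣ) : A)))
        + ((x 2 : A) + x 3 + x 4 + x 5) * (((u⁻¹ : Aˣ) : A) * x 4 * x 2 * ((v⁻¹ : Aˣ) : A)) ^ 2
      = 0 := by
  set a : A := (x 2 : A) with ha
  set b : A := (x 3 : A) with hb
  set c : A := (x 4 : A) with hc
  set d : A := (x 5 : A) with hd
  set Ui : A := ((u⁻¹ : Aˣ) : A) with hUi
  set Vi : A := ((v⁻¹ : Aˣ) : A) with hVi
  have hq0 : (q : K) ≠ 0 := q.ne_zero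
  have hqi : (q : K)⁻¹ * (q : K) = 1 := inv_mul_cancel₀ hq0
  have hqi' : (q : K) * (q : K)⁻¹ = 1 := mul_inv_cancel₀ hq0
  have h_ab : a * b = (q : K) • (b * a) := hcomm 2 3 (by norm_num) (by norm_num) (by norm_num)
  have h_ac : a * c = (q : K) • (c * a) := hcomm 2 4 (by norm_num) (by norm_num) (by norm_num)
  have h_ad : a * d = (q : K) • (d * a) := hcomm 2 5 (by norm_num) (by norm_num) (by norm_num)
  have h_bc : b * c = (q : K) • (c * b) := hcomm 3 4 (by norm_num) (by norm_num) (by norm_num)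
  have h_bd : b * d = (q : K) • (d * b) := hcomm 3 5 (by norm_num) (by norm_num) (by norm_num)
  have h_cd : c * d = (q : K) • (d * c) := hcomm 4 5 (by norm_num) (by norm_num) (by norm_num)
  have h_av : a * (v : A) = (q : K) • ((v : A) * a) := by
    rw [hv, mul_add, add_mul, h_ab, h_ac, smul_add]
  have h_vd : (v : A) * d = (q : K) • (d * (v : A)) := by
    rw [hv, add_mul, mul_add, h_bd, h_cd, smul_add]
  have h_abu : (a + b) * (u : A) = (q : K) • ((u : A) * (a + b)) := by
    rw [hu]
    simp only [mul_add, add_mul, smul_add]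
    rw [h_ac, h_ad, h_bc, h_bd]
    abel
  have h_va' : Vi * a = (q : K) • (a * Vi) := conj_aux (q : K) v a h_av
  have h_vd' : Vi * d = (q : K)⁻¹ • (d * Vi) := by
    have h := conj_aux' (q : K) v d h_vd
    rw [h, smul_smul, hqi, one_smul]
  have h_abu' : (a + b) * Ui = (q : K)⁻¹ • (Ui * (a + b)) := by
    have h := conj_aux (q : K) u (a + b) h_abu
    rw [h, smul_smul, hqi, one_smul]
  set S : A := Ui * c * a * Vi with hS
  set T : A := a + b + c + d with hT
  have hvT : Vi * T = ((q : K) • a + (q : K)⁻¹ • d) * Vi + 1 := by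
    have hT' : T = a + (v : A) + d := by rw [hT, hv]; abel
    rw [hT', mul_add, mul_add, h_va', h_vd', hVi, Units.inv_mul, add_mul, smul_mul_assoc,
      smul_mul_assoc]
    abel
  have hTu : T * Ui = (q : K)⁻¹ • (Ui * (a + b)) + 1 := by
    have hT' : T = (a + b) + (u : A) := by rw [hT, hu]; abel
    rw [hT', add_mul, h_abu', hUi, Units.mul_inv]
  -- the polynomial identity
  have e1 : a * (c * a) = (q : K) • (c * a * a) := by
    rw [← mul_assoc, h_ac, smul_mul_assoc]
  have e2 : c * a * b = b * (c * a) := by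
    have hcb : c * b = (q : K)⁻¹ • (b * c) := by
      rw [h_bc, smul_smul, hqi, one_smul]
    rw [mul_assoc, h_ab, mul_smul_comm, ← mul_assoc, hcb, smul_mul_assoc, smul_smul, hqi',
      one_smul, mul_assoc]
  have e3 : c * a * c = (q : K) • (c * (c * a)) := by
    rw [mul_assoc, h_ac, mul_smul_comm, ← mul_assoc]
  have e4 : (q : K)⁻¹ • (c * a * d) = (q : K) • (d * (c * a)) := by
    rw [mul_assoc, h_ad, mul_smul_comm, ← mul_assoc c d a, h_cd, smul_mul_assoc, smul_smul,
      smul_smul, mul_assoc d c a, hqi, one_mul]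
  have hpoly : c * a * ((q : K) • a + (q : K)⁻¹ • d) + c * a * (v : A)
      = (a + b) * (c * a) + (q : K) • ((u : A) * (c * a)) := by
    rw [hv, hu]
    simp only [mul_add, add_mul, mul_smul_comm, smul_add]
    rw [e1, e2, e3, e4]
    abel
  -- cancellation of u on the left and v on the right
  have cancel : ∀ X Y : A, (u : A) * X * (v : A) = (u : A) * Y * (v : A) → X = Y := by
    intro X Y h
    have h2 := congrArg (fun z => Ui * z * Vi) h
    simpa [hUi, hVi, mul_assoc, Units.inv_mul_cancel_left, Units.mul_inv_cancel_right,
      Units.mul_inv, Units.inv_mul] using h2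
  have huS : (u : A) * S = c * a * Vi := by
    rw [hS, hUi, ← mul_assoc, ← mul_assoc, Units.mul_inv_cancel_left]
  have lhs_eq : (u : A) * (S * T) * (v : A)
      = c * a * ((q : K) • a + (q : K)⁻¹ • d) + c * a * (v : A) := by
    calc (u : A) * (S * T) * (v : A) = ((u : A) * S) * (T * (v : A)) := by
          simp only [mul_assoc]
      _ = c * a * (Vi * (T * (v : A))) := by rw [huS]; simp only [mul_assoc]
      _ = c * a * ((Vi * T) * (v : A)) := by simp only [mul_assoc]
      _ = c * a * (((q : K) • a + (q : K)⁻¹ • d) * (Vi * (v : A)) + (v : A)) := by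
          rw [hvT, add_mul, one_mul]; simp only [mul_assoc]
      _ = c * a * (((q : K) • a + (q : K)⁻¹ • d) + (v : A)) := by
          rw [hVi, Units.inv_mul, mul_one]
      _ = c * a * ((q : K) • a + (q : K)⁻¹ • d) + c * a * (v : A) := by rw [mul_add]
  have rhs_eq : (u : A) * ((q : K) • (T * S)) * (v : A)
      = (a + b) * (c * a) + (q : K) • ((u : A) * (c * a)) := by
    calc (u : A) * ((q : K) • (T * S)) * (v : A)
        = (q : K) • ((u : A) * (T * Ui) * (c * a * (Vi * (v : A)))) := by
          rw [hS, mul_smul_comm, smul_mul_assoc]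
          congr 1
          simp only [mul_assoc]
      _ = (q : K) • (((q : K)⁻¹ • ((u : A) * (Ui * (a + b))) + (u : A)) * (c * a)) := by
          rw [hTu, hVi, Units.inv_mul, mul_one, mul_add, mul_one, mul_smul_comm]
      _ = (q : K) • ((q : K)⁻¹ • ((a + b) * (c * a))) + (q : K) • ((u : A) * (c * a)) := by
          rw [hUi, Units.mul_inv_cancel_left, add_mul, smul_mul_assoc, smul_add]
      _ = (a + b) * (c * a) + (q : K) • ((u : A) * (c * a)) := by
          rw [smul_smul, hqi', one_smul]
  have key : S * T = (q : K) • (T * S) :=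
    cancel _ _ (lhs_eq.trans (hpoly.trans rhs_eq.symm))
  have h1 : S * S * T = ((q : K) * (q : K)) • (T * (S * S)) := by
    rw [mul_assoc, key, mul_smul_comm, ← mul_assoc, key, smul_mul_assoc, smul_smul, mul_assoc]
  have h2 : S * T * S = (q : K) • (T * (S * S)) := by
    rw [key, smul_mul_assoc, mul_assoc]
  have hco : ((q : K) + (q : K)⁻¹) * (q : K) = (q : K) * (q : K) + 1 := by
    rw [add_mul, hqi]
  show S ^ 2 * T - ((q : K) + (q : K)⁻¹) • (S * T * S) + T * S ^ 2 = 0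
  rw [sq, h1, h2, smul_smul, hco]
  module
end
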